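/- For the function f(t,x) := log(√(1 + ((x+1)/t)²) - (x+1)/t) - (x²/(t·c(x)) - (x+1)²/(t·c(x+1))), where c(x) = 2(1 - 1/(x+1)), one has ∂ₓ f(t,x) ≥ 0 and ∂ₜ f(t,0) ≤ 0 for all t, x ≥ 0, and consequently f(t,x) ≥ 0 for all t > 0, x ≥ 0. -/

import Mathlib

/-!
Since `c x = 2x/(x+1)`, the rational part of `f t x` collapses to `-(x+1)/t`, and
`log (√(1+u²) - u) = arsinh (-u) = -arsinh u`; hence `f t x = g ((x+1)/t)` with
`g u = u - arsinh u`. As `g' u = 1 - 1/√(1+u²) ≥ 0`, the function `g` is monotone with `g 0 = 0`,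
and the chain rule through `u = (x+1)/t` (increasing in `x`, decreasing in `t`) gives the signs
of the two partial derivatives.
-/

noncomputable def cAux (x : ℝ) : ℝ := 2 * (1 - 1 / (x + 1))

noncomputable def fAux (t x : ℝ) : ℝ :=
  Real.log (Real.sqrt (1 + ((x + 1) / t) ^ 2) - (x + 1) / t)
    - (x ^ 2 / (t * cAux x) - (x + 1) ^ 2 / (t * cAux (x + 1)))

open Real

lemma log_sqrt_one_add_sq_sub (u : ℝ) : log (√(1 + u ^ 2) - u) = -arsinh u := by
  rw [← arsinh_neg, arsinh, neg_sq, neg_add_eq_sub]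

lemma sq_div_mul_cAux (t : ℝ) {x : ℝ} (hx : x + 1 ≠ 0) :
    x ^ 2 / (t * cAux x) = x * (x + 1) / (2 * t) := by
  -- at `x = 0` also `cAux x = 0`, and both sides vanish by the convention `a / 0 = 0`
  rcases eq_or_ne x 0 with rfl | hx0
  · simp
  rcases eq_or_ne t 0 with rfl | ht
  · simp
  have hc : cAux x = 2 * x / (x + 1) := by
    unfold cAux
    field_simp
    ring
  rw [hc]
  field_simp

lemma fAux_eq_sub_arsinh (t : ℝ) {x : ℝ} (hx : -1 < x) :
    fAux t x = (x + 1) / t - arsinh ((x + 1) / t) := by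
  rw [fAux, log_sqrt_one_add_sq_sub, sq_div_mul_cAux t (by linarith),
    sq_div_mul_cAux t (by linarith)]
  ring

lemma hasDerivAt_sub_arsinh (u : ℝ) :
    HasDerivAt (fun v => v - arsinh v) (1 - (√(1 + u ^ 2))⁻¹) u :=
  (hasDerivAt_id u).sub (hasDerivAt_arsinh u)

lemma one_sub_inv_sqrt_one_add_sq_nonneg (u : ℝ) : 0 ≤ 1 - (√(1 + u ^ 2))⁻¹ := by
  have h : 1 ≤ √(1 + u ^ 2) := Real.one_le_sqrt.mpr (by nlinarith)
  linarith [inv_le_one_of_one_le₀ h]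

lemma monotone_sub_arsinh : Monotone fun u : ℝ => u - arsinh u :=
  monotone_of_deriv_nonneg (fun u => (hasDerivAt_sub_arsinh u).differentiableAt)
    fun u => (hasDerivAt_sub_arsinh u).deriv ▸ one_sub_inv_sqrt_one_add_sq_nonneg u

lemma arsinh_le_self {u : ℝ} (hu : 0 ≤ u) : arsinh u ≤ u := by
  simpa using monotone_sub_arsinh hu

lemma hasDerivAt_fAux_right {t x : ℝ} (hx : -1 < x) :
    HasDerivAt (fun y => fAux t y) ((1 - (√(1 + ((x + 1) / t) ^ 2))⁻¹) * (1 / t)) x := by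
  have hu : HasDerivAt (fun y : ℝ => (y + 1) / t) (1 / t) x := by
    simpa using ((hasDerivAt_id x).add_const 1).div_const t
  refine ((hasDerivAt_sub_arsinh _).comp x hu).congr_of_eventuallyEq ?_
  filter_upwards [Ioi_mem_nhds hx] with y hy using fAux_eq_sub_arsinh t hy

lemma hasDerivAt_fAux_left_zero {t : ℝ} (ht : t ≠ 0) :
    HasDerivAt (fun s => fAux s 0) ((1 - (√(1 + (1 / t) ^ 2))⁻¹) * -(t ^ 2)⁻¹) t := by
  have hu : HasDerivAt (fun s : ℝ => 1 / s) (-(t ^ 2)⁻¹) t := by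
    simpa using hasDerivAt_inv ht
  refine ((hasDerivAt_sub_arsinh _).comp t hu).congr_of_eventuallyEq ?_
  filter_upwards with s
  simpa using fAux_eq_sub_arsinh s (x := 0) (by norm_num)

theorem fAux_properties :
    (∀ t x : ℝ, 0 < t → 0 ≤ x → 0 ≤ deriv (fun y => fAux t y) x) ∧
    (∀ t : ℝ, 0 < t → deriv (fun s => fAux s 0) t ≤ 0) ∧
    (∀ t x : ℝ, 0 < t → 0 ≤ x → 0 ≤ fAux t x) := by
  refine ⟨fun t x ht hx => ?_, fun t ht => ?_, fun t x ht hx => ?_⟩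
  · rw [(hasDerivAt_fAux_right (by linarith)).deriv]
    exact mul_nonneg (one_sub_inv_sqrt_one_add_sq_nonneg _) (by positivity)
  · rw [(hasDerivAt_fAux_left_zero ht.ne').deriv]
    exact mul_nonpos_of_nonneg_of_nonpos (one_sub_inv_sqrt_one_add_sq_nonneg _)
      (neg_nonpos.mpr (by positivity))
  · rw [fAux_eq_sub_arsinh t (by linarith), sub_nonneg]
    exact arsinh_le_self (by positivity)
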